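/- arXiv:2108.00025 — 3 statements merged into one kernel-verified Lean document; each statement's English description precedes it below -/
import Mathlib

section
/- Let A and A' be unital C*-algebras, P₁ a nontrivial symmetric projection in A, P₂ = I_A − P₁, A_{jk} = P_j A P_k, and suppose A satisfies (♠): for j ∈ {1,2}, P_j A X = {0} implies X = 0. Fix an integer n ≥ 2 and let φ: A → A' be a bijective map with φ(I_A) = I_{A'} satisfying (•): φ(p_{n*}(A,B,Ξ,…,Ξ)) = p_{n*}(φ(A),φ(B),φ(Ξ),…,φ(Ξ)) for all A, B ∈ A and Ξ ∈ {P₁, P₂, I_A}. Then for any A₁₁ ∈ A₁₁ and B₂₂ ∈ A₂₂ one has φ(A₁₁ + B₂₂) = φ(A₁₁) + φ(B₂₂). -/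
/-- The `*`-Lie product `[x,y]_* = xy - y x*`. -/
def starLie {R : Type*} [Ring R] [StarRing R] (x y : R) : R := x * y - y * star x

/-- `pn n a b xi = p_{n*}(a, b, xi, ..., xi)` (with `n - 2` trailing copies of `xi`). -/
def pn {R : Type*} [Ring R] [StarRing R] (n : ℕ) (a b ξ : R) : R :=
  (fun z => starLie z ξ)^[n - 2] (starLie a b)

/-!
Choose `T` with `φ T = φ a + φ b` and put `D = T - (a + b)`. Since `p_{n*}` is additive in its
first two slots and vanishes as soon as `[x, y]_* = 0`, injectivity of `φ` gives
`p_{n*}(X, D, Ξ) = 0` whenever `[X, a]_* = 0` or `[X, b]_* = 0`, and symmetrically in the first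
slot. Testing with `X = P_j` kills the off-diagonal Peirce components of `D`, so `D` commutes
with `P₁`. On a corner `P A P`, the map `z ↦ [z, P]_*` sends `w` to `w - w*` and doubles skew
elements, so its iterates annihilate no nonzero skew element; testing with `P_j` in the first
slot and `i P_j` in the second shows that `D P_j - (D P_j)*` and then `i D P_j` vanish.
-/

open Function

section StarLie

variable {R : Type*} [Ring R] [StarRing R]

lemma starLie_add_left (a a' b : R) : starLie (a + a') b = starLie a b + starLie a' b := by
  simp only [starLie, add_mul, mul_add, star_add]; abel

lemma starLie_add_right (a b b' : R) : starLie a (b + b') = starLie a b + starLie a b' := by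
  simp only [starLie, add_mul, mul_add]; abel

lemma starLie_sub_left (a a' b : R) : starLie (a - a') b = starLie a b - starLie a' b := by
  simp only [starLie, sub_mul, mul_sub, star_sub]; abel

lemma starLie_sub_right (a b b' : R) : starLie a (b - b') = starLie a b - starLie a b' := by
  simp only [starLie, sub_mul, mul_sub]; abel

def starLieRight (ξ : R) : R →+ R :=
  AddMonoidHom.mk' (starLie · ξ) (starLie_add_left · · ξ)

lemma pn_eq_iterate (n : ℕ) (a b ξ : R) : pn n a b ξ = (starLieRight ξ)^[n - 2] (starLie a b) :=
  rfl

lemma pn_add_left (n : ℕ) (a a' b ξ : R) : pn n (a + a') b ξ = pn n a b ξ + pn n a' b ξ := by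
  simp only [pn_eq_iterate, starLie_add_left, iterate_map_add]

lemma pn_add_right (n : ℕ) (a b b' ξ : R) : pn n a (b + b') ξ = pn n a b ξ + pn n a b' ξ := by
  simp only [pn_eq_iterate, starLie_add_right, iterate_map_add]

lemma pn_sub_left (n : ℕ) (a a' b ξ : R) : pn n (a - a') b ξ = pn n a b ξ - pn n a' b ξ := by
  simp only [pn_eq_iterate, starLie_sub_left, iterate_map_sub]

lemma pn_sub_right (n : ℕ) (a b b' ξ : R) : pn n a (b - b') ξ = pn n a b ξ - pn n a b' ξ := by
  simp only [pn_eq_iterate, starLie_sub_right, iterate_map_sub]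

lemma pn_eq_zero_of_starLie_eq_zero (n : ℕ) {a b : R} (ξ : R) (h : starLie a b = 0) :
    pn n a b ξ = 0 := by
  rw [pn_eq_iterate, h, iterate_map_zero]

lemma pn_one_one (n : ℕ) (ξ : R) : pn n 1 1 ξ = 0 :=
  pn_eq_zero_of_starLie_eq_zero n ξ (by rw [starLie, star_one, sub_self])

lemma mul_iterate_starLieRight_mul {P Q : R} (hPQ : P * Q = 0) (hQ : IsIdempotentElem Q)
    (k : ℕ) (z : R) : P * (starLieRight Q)^[k] z * Q = P * z * Q := by
  induction k with
  | zero => rfl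
  | succ k ih =>
    rw [iterate_succ_apply', ← ih]
    simp only [starLieRight, AddMonoidHom.mk'_apply, starLie, mul_sub, sub_mul, mul_assoc, hQ.eq]
    rw [← mul_assoc P Q, hPQ, zero_mul, sub_zero]

lemma eq_zero_of_iterate_starLieRight_eq_zero [IsAddTorsionFree R] {P : R} (hP : IsSelfAdjoint P) :
    ∀ (k : ℕ) {Z : R}, P * Z = Z → Z * P = Z → star Z = -Z → (starLieRight P)^[k] Z = 0 → Z = 0
  | 0, _, _, _, _, h => h
  | k + 1, Z, hPZ, hZP, hZ, h => by
    have hdouble : starLieRight P Z = Z + Z := by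
      simp [starLieRight, starLie, hZP, hZ, hPZ]
    rw [iterate_succ_apply, hdouble] at h
    have h2 := eq_zero_of_iterate_starLieRight_eq_zero hP k (by rw [mul_add, hPZ])
      (by rw [add_mul, hZP]) (by rw [star_add, hZ, neg_add]) h
    rw [← two_nsmul] at h2
    exact (smul_eq_zero.1 h2).resolve_left two_ne_zero

lemma IsStarProjection.mul_mul_one_sub_eq_zero_of_pn_eq_zero {P D : R} (hP : IsStarProjection P)
    {n : ℕ} (h : pn n P D (1 - P) = 0) : P * D * (1 - P) = 0 := by
  have h' := congr_arg (P * · * (1 - P)) h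
  simp only [mul_zero, zero_mul, pn_eq_iterate] at h'
  rw [mul_iterate_starLieRight_mul hP.mul_one_sub_self hP.one_sub.isIdempotentElem] at h'
  rw [← h', starLie, hP.isSelfAdjoint.star_eq, mul_sub P, sub_mul, ← mul_assoc P P,
    hP.isIdempotentElem.eq, mul_assoc P (D * P), mul_assoc D P,
    hP.mul_one_sub_self, mul_zero, mul_zero, sub_zero]

end StarLie

section ComplexStarAlgebra

variable {R : Type*} [Ring R] [StarRing R] [Algebra ℂ R] [StarModule ℂ R]

lemma IsStarProjection.mul_eq_zero_of_pn_eq_zero {P D : R} (hP : IsStarProjection P)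
    (hDP : D * P = P * D) {n : ℕ} (h₁ : pn n D P P = 0) (h₂ : pn n (Complex.I • P) D P = 0) :
    D * P = 0 := by
  have : IsAddTorsionFree R := .of_isTorsionFree ℂ R
  have hPP := hP.isIdempotentElem.eq
  have hPs := hP.isSelfAdjoint.star_eq
  have hPd : P * (D * P) = D * P := by rw [hDP, ← mul_assoc, hPP]
  have hdP : D * P * P = D * P := by rw [mul_assoc, hPP]
  have hPsd : P * star (D * P) = star (D * P) := by
    simpa only [star_mul, hPs] using congr_arg star hdP
  have hsdP : star (D * P) * P = star (D * P) := by
    simpa only [star_mul, hPs] using congr_arg star hPd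
  have hsd : P * star D = star (D * P) := by rw [star_mul, hPs]
  have hsym : D * P - star (D * P) = 0 := by
    refine eq_zero_of_iterate_starLieRight_eq_zero hP.isSelfAdjoint (n - 2) ?_ ?_ ?_ ?_
    · rw [mul_sub, hPd, hPsd]
    · rw [sub_mul, hdP, hsdP]
    · rw [star_sub, star_star, neg_sub]
    · rwa [pn_eq_iterate, starLie, hsd] at h₁
  have hIdouble : Complex.I • (D * P + D * P) = 0 := by
    refine eq_zero_of_iterate_starLieRight_eq_zero hP.isSelfAdjoint (n - 2) ?_ ?_ ?_ ?_
    · rw [mul_smul_comm, mul_add, hPd]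
    · rw [smul_mul_assoc, add_mul, hdP]
    · rw [star_smul, star_add, ← sub_eq_zero.1 hsym, Complex.star_def, Complex.conj_I, neg_smul]
    · rwa [pn_eq_iterate, starLie, star_smul, hPs, smul_mul_assoc, mul_smul_comm, ← hDP,
        Complex.star_def, Complex.conj_I, neg_smul, sub_neg_eq_add, ← smul_add] at h₂
  rw [smul_eq_zero, ← two_nsmul] at hIdouble
  exact (smul_eq_zero.1 (hIdouble.resolve_left Complex.I_ne_zero)).resolve_left two_ne_zero

lemma IsStarProjection.eq_zero_of_pn_eq_zero {P D : R} (hP : IsStarProjection P) {n : ℕ}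
    (h₁₂ : pn n P D (1 - P) = 0) (h₂₁ : pn n (1 - P) D P = 0)
    (h₁₁ : pn n D P P = 0) (h₁₁' : pn n (Complex.I • P) D P = 0)
    (h₂₂ : pn n D (1 - P) (1 - P) = 0) (h₂₂' : pn n (Complex.I • (1 - P)) D (1 - P) = 0) :
    D = 0 := by
  have hPD : P * D * (1 - P) = 0 := hP.mul_mul_one_sub_eq_zero_of_pn_eq_zero h₁₂
  have hDP : (1 - P) * D * P = 0 := by
    simpa using hP.one_sub.mul_mul_one_sub_eq_zero_of_pn_eq_zero (by simpa using h₂₁)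
  have hcomm : D * P = P * D := by
    simp only [mul_sub, sub_mul, one_mul, mul_one, sub_eq_zero] at hPD hDP
    rw [hDP, ← hPD]
  have hcomm' : D * (1 - P) = (1 - P) * D := by
    rw [mul_sub, sub_mul, hcomm, mul_one, one_mul]
  calc D = D * P + D * (1 - P) := by rw [← mul_add, add_sub_cancel, mul_one]
    _ = 0 := by
      rw [hP.mul_eq_zero_of_pn_eq_zero hcomm h₁₁ h₁₁',
        hP.one_sub.mul_eq_zero_of_pn_eq_zero hcomm' h₂₂ h₂₂', add_zero]

end ComplexStarAlgebra

section Transfer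

variable {R R' : Type*} [Ring R] [StarRing R] [Ring R'] [StarRing R'] {φ : R → R'} {n : ℕ} {Ξ : R}

lemma pn_sub_add_right_eq_zero (hφ : Injective φ) (hφ0 : φ 0 = 0)
    (hpres : ∀ x y, φ (pn n x y Ξ) = pn n (φ x) (φ y) (φ Ξ)) {T a b X : R}
    (hT : φ T = φ a + φ b) (hX : pn n X a Ξ = 0 ∨ pn n X b Ξ = 0) :
    pn n X (T - (a + b)) Ξ = 0 := by
  rw [pn_sub_right, sub_eq_zero]
  apply hφ
  rw [hpres, hT, pn_add_right, ← hpres, ← hpres, pn_add_right]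
  rcases hX with h | h <;> simp [h, hφ0]

lemma pn_sub_add_left_eq_zero (hφ : Injective φ) (hφ0 : φ 0 = 0)
    (hpres : ∀ x y, φ (pn n x y Ξ) = pn n (φ x) (φ y) (φ Ξ)) {T a b X : R}
    (hT : φ T = φ a + φ b) (hX : pn n a X Ξ = 0 ∨ pn n b X Ξ = 0) :
    pn n (T - (a + b)) X Ξ = 0 := by
  rw [pn_sub_left, sub_eq_zero]
  apply hφ
  rw [hpres, hT, pn_add_left, ← hpres, ← hpres, pn_add_left]
  rcases hX with h | h <;> simp [h, hφ0]

end Transfer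

variable {A A' : Type*}
  [NormedRing A] [StarRing A] [CStarRing A] [NormedAlgebra ℂ A]
  [CompleteSpace A] [StarModule ℂ A]
  [NormedRing A'] [StarRing A'] [CStarRing A'] [NormedAlgebra ℂ A']
  [CompleteSpace A'] [StarModule ℂ A']

theorem stmt4_general
    (P₁ : A) (hP₁proj : P₁ * P₁ = P₁) (hP₁star : star P₁ = P₁)
    (P₂ : A) (hP₂ : P₂ = 1 - P₁)
    (n : ℕ)
    (φ : A → A') (hbij : Function.Bijective φ) (hunit : φ 1 = 1)
    (hbullet : ∀ a b : A, ∀ Ξ ∈ ({P₁, P₂, 1} : Set A),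
      φ (pn n a b Ξ) = pn n (φ a) (φ b) (φ Ξ))
    :
    ∀ a b : A, (∃ x : A, a = P₁ * x * P₁) → (∃ y : A, b = P₂ * y * P₂) →
      φ (a + b) = φ a + φ b := by
  rintro a b ⟨x, rfl⟩ ⟨y, rfl⟩
  subst hP₂
  have hP : IsStarProjection P₁ := ⟨hP₁proj, hP₁star⟩
  have hφ0 : φ 0 = 0 := by simpa [hunit, pn_one_one] using hbullet 1 1 1 (by simp)
  obtain ⟨T, hT⟩ := hbij.2 (φ (P₁ * x * P₁) + φ ((1 - P₁) * y * (1 - P₁)))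
  suffices T - (P₁ * x * P₁ + (1 - P₁) * y * (1 - P₁)) = 0 by rw [← sub_eq_zero.1 this, hT]
  have hright := fun X Ξ hΞ => pn_sub_add_right_eq_zero (X := X) hbij.1 hφ0 (hbullet · · Ξ hΞ) hT
  have hleft := fun X Ξ hΞ => pn_sub_add_left_eq_zero (X := X) hbij.1 hφ0 (hbullet · · Ξ hΞ) hT
  have h₁₂ (z : A) : P₁ * ((1 - P₁) * z) = 0 := by rw [← mul_assoc, hP.mul_one_sub_self, zero_mul]
  have h₂₁ (z : A) : (1 - P₁) * (P₁ * z) = 0 := by rw [← mul_assoc, hP.one_sub_mul_self, zero_mul]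
  refine hP.eq_zero_of_pn_eq_zero (hright _ _ (by simp) (.inr ?_)) (hright _ _ (by simp) (.inl ?_))
    (hleft _ _ (by simp) (.inr ?_)) (hright _ _ (by simp) (.inr ?_)) (hleft _ _ (by simp) (.inl ?_))
    (hright _ _ (by simp) (.inl ?_)) <;>
  -- each side condition is `[u, v]_* = 0` for `u` and `v` in orthogonal corners
  refine pn_eq_zero_of_starLie_eq_zero _ _ ?_ <;>
  simp [starLie, mul_assoc, h₁₂, h₂₁, hP.mul_one_sub_self, hP.one_sub_mul_self, hP₁star,
    smul_mul_assoc, mul_smul_comm, star_smul, star_mul]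

theorem stmt4
    (P₁ : A) (hP₁proj : P₁ * P₁ = P₁) (hP₁star : star P₁ = P₁)
    (hP₁ne0 : P₁ ≠ 0) (hP₁ne1 : P₁ ≠ 1)
    (P₂ : A) (hP₂ : P₂ = 1 - P₁)
    (hspade : ∀ Pj ∈ ({P₁, P₂} : Set A), ∀ X : A, (∀ Y : A, Pj * Y * X = 0) → X = 0)
    (n : ℕ) (hn : 2 ≤ n)
    (φ : A → A') (hbij : Function.Bijective φ) (hunit : φ 1 = 1)
    (hbullet : ∀ a b : A, ∀ Ξ ∈ ({P₁, P₂, 1} : Set A),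
      φ (pn n a b Ξ) = pn n (φ a) (φ b) (φ Ξ))
    :
    ∀ a b : A, (∃ x : A, a = P₁ * x * P₁) → (∃ y : A, b = P₂ * y * P₂) →
      φ (a + b) = φ a + φ b :=
  stmt4_general P₁ hP₁proj hP₁star P₂ hP₂ n φ hbij hunit hbullet
end

section
/- Let A and A' be unital C*-algebras, P₁ a nontrivial symmetric projection in A, P₂ = I_A − P₁, A_{jk} = P_j A P_k, and suppose A satisfies (♠): for j ∈ {1,2}, P_j A X = {0} implies X = 0. Fix an integer n ≥ 2 and let φ: A → A' be a bijective map with φ(I_A) = I_{A'} satisfying (•): φ(p_{n*}(A,B,Ξ,…,Ξ)) = p_{n*}(φ(A),φ(B),φ(Ξ),…,φ(Ξ)) for all A, B ∈ A and Ξ ∈ {P₁, P₂, I_A}. Then for any A₁₁ ∈ A₁₁, B₁₂ ∈ A₁₂, C₂₁ ∈ A₂₁ and D₂₂ ∈ A₂₂ one has φ(A₁₁ + B₁₂ + C₂₁ + D₂₂) = φ(A₁₁) + φ(B₁₂) + φ(C₂₁) + φ(D₂₂). -/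
/-!
Pick `T` with `φ T = φ a + φ b + φ c + φ d`; it suffices to show that each Peirce component
`P_j T P_k` is the given one. For `m ≥ 3` and `P_k s = 0`, `p_{m*}(s, x, P_k, …, P_k) = u - u*`
with `u = s x P_k`; for `s = P_l Y P_j` with `l ≠ k` this only sees the `(j, k)` component of `x`.
Since `p_{m*}` is additive in `x` and `φ` is injective, `P_l Y P_j (T - x_{jk}) P_k = 0` for all
`Y`, and `(♠)` for `P_l` gives `P_j T P_k = x_{jk}`. The case `n = 2` is reduced to `n = 3`,
since then `φ` preserves `[·,·]_*` itself.
-/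

section StarLie

variable {R : Type*} [Ring R] [StarRing R]

@[simp]
lemma starLie_zero_left (y : R) : starLie 0 y = 0 := by
  simp [starLie]

@[simp]
lemma starLie_zero_right (x : R) : starLie x 0 = 0 := by
  simp [starLie]

lemma starLie_add_left_s6 (x y z : R) : starLie (x + y) z = starLie x z + starLie y z := by
  simp only [starLie, add_mul, mul_add, star_add]; abel

lemma starLie_add_right_s6 (x y z : R) : starLie x (y + z) = starLie x y + starLie x z := by
  simp only [starLie, add_mul, mul_add]; abel

lemma pn_of_le_two {n : ℕ} (hn : n ≤ 2) (a b ξ : R) : pn n a b ξ = starLie a b := by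
  simp [pn, Nat.sub_eq_zero_of_le hn]

lemma pn_three (a b ξ : R) : pn 3 a b ξ = starLie (starLie a b) ξ := rfl

@[simp]
lemma pn_zero_left (n : ℕ) (b ξ : R) : pn n 0 b ξ = 0 := by
  simpa [pn] using Function.iterate_fixed (f := (starLie · ξ)) (starLie_zero_left ξ) _

@[simp]
lemma pn_zero_middle (n : ℕ) (a ξ : R) : pn n a 0 ξ = 0 := by
  simpa [pn] using Function.iterate_fixed (f := (starLie · ξ)) (starLie_zero_left ξ) _

lemma pn_add_middle (n : ℕ) (a x y ξ : R) : pn n a (x + y) ξ = pn n a x ξ + pn n a y ξ := by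
  rw [pn, starLie_add_right_s6]
  exact Function.Semiconj₂.iterate (starLie_add_left_s6 · · ξ) _ _ _

lemma pn_sum_middle {ι : Type*} (n : ℕ) (a ξ : R) (s : Finset ι) (y : ι → R) :
    pn n a (∑ i ∈ s, y i) ξ = ∑ i ∈ s, pn n a (y i) ξ :=
  map_sum (AddMonoidHom.mk' (pn n a · ξ) (pn_add_middle n a · · ξ)) y s

lemma pn_sub_middle (n : ℕ) (a x y ξ : R) : pn n a (x - y) ξ = pn n a x ξ - pn n a y ξ :=
  map_sub (AddMonoidHom.mk' (pn n a · ξ) (pn_add_middle n a · · ξ)) x y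

end StarLie

section StarProjection

variable {R : Type*} [Ring R] [StarRing R] {q : R}

lemma iterate_starLie_sub_star (hq : IsStarProjection q) {u : R} (huq : u * q = u)
    (hqu : q * u = 0) (k : ℕ) : (starLie · q)^[k] (u - star u) = u - star u := by
  refine Function.iterate_fixed ?_ k
  have hsuq : star u * q = 0 := by rw [← hq.isSelfAdjoint.star_eq, ← star_mul, hqu, star_zero]
  have hqsu : q * star u = star u := by rw [← hq.isSelfAdjoint.star_eq, ← star_mul, huq]
  simp only [starLie, star_sub, star_star, sub_mul, mul_sub, huq, hqu, hsuq, hqsu]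
  abel

lemma pn_eq_of_mul_eq_zero (hq : IsStarProjection q) {s : R} (hqs : q * s = 0) (x : R)
    {m : ℕ} (hm : 3 ≤ m) : pn m s x q = s * x * q - star (s * x * q) := by
  have hsq : star s * q = 0 := by rw [← hq.isSelfAdjoint.star_eq, ← star_mul, hqs, star_zero]
  have hfirst : starLie (starLie s x) q = s * x * q - star (s * x * q) := by
    simp only [starLie, star_sub, star_mul, star_star, sub_mul, mul_sub, hq.isSelfAdjoint.star_eq]
    simp only [mul_assoc, hsq, mul_zero, ← mul_assoc q s, hqs, zero_mul]
    abel
  obtain ⟨k, rfl⟩ : ∃ k, m = k + 3 := ⟨m - 3, by omega⟩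
  rw [pn, show k + 3 - 2 = k + 1 by omega, Function.iterate_succ_apply, hfirst]
  exact iterate_starLie_sub_star hq (by rw [mul_assoc, hq.isIdempotentElem.eq])
    (by rw [← mul_assoc, ← mul_assoc, hqs, zero_mul, zero_mul]) k

lemma mul_mul_eq_zero_of_forall_pn_eq_zero (hq : IsStarProjection q) {l : R}
    (hl : IsStarProjection l) (hql : q * l = 0) (hl_faithful : ∀ X, (∀ Y, l * Y * X = 0) → X = 0)
    {m : ℕ} (hm : 3 ≤ m) {p x : R} (h : ∀ Y, pn m (l * Y * p) x q = 0) : p * x * q = 0 := by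
  refine hl_faithful _ fun Y => ?_
  have hqs : q * (l * Y * p) = 0 := by simp only [← mul_assoc, hql, zero_mul]
  have h' := h Y
  rw [pn_eq_of_mul_eq_zero hq hqs x hm] at h'
  set u := l * Y * p * x * q
  have hlu : l * u = u := by simp only [u, ← mul_assoc, hl.isIdempotentElem.eq]
  have hlsu : l * star u = 0 := by
    rw [← hl.isSelfAdjoint.star_eq, ← star_mul]
    simp [u, mul_assoc, hql]
  calc l * Y * (p * x * q) = l * (u - star u) := by
        rw [mul_sub, hlu, hlsu, sub_zero]; simp only [u, mul_assoc]
    _ = 0 := by rw [h', mul_zero]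

end StarProjection

section Peirce

variable {R : Type*} [Ring R] {ι : Type*} {P : ι → R}

lemma eq_sum_mul_mul [Fintype ι] (hsum : ∑ i, P i = 1) (t : R) :
    t = ∑ jk : ι × ι, P jk.1 * t * P jk.2 := by
  conv_lhs => rw [← one_mul t, ← mul_one (1 * t), ← hsum]
  simp only [Finset.sum_mul, Finset.mul_sum, Fintype.sum_prod_type]
  exact Finset.sum_comm

lemma mul_mul_mul_mul_eq_zero (horth : Pairwise fun i j => P i * P j = 0) {j k j' k' : ι}
    (hne : (j', k') ≠ (j, k)) (z : R) : P j * (P j' * z * P k') * P k = 0 := by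
  rcases eq_or_ne j' j with rfl | hj
  · have hk : k' ≠ k := by simpa using hne
    simp [mul_assoc, horth hk]
  · simp [← mul_assoc, horth hj.symm]

end Peirce

lemma eq_of_map_eq_sum {R R' ι : Type*} [Zero R] [AddCommMonoid R'] [Fintype ι] {φ : R → R'}
    (hinj : Function.Injective φ) (h0 : φ 0 = 0) {t : R} {y : ι → R}
    (ht : φ t = ∑ i, φ (y i)) (i : ι) (hy : ∀ j ≠ i, y j = 0) : t = y i :=
  hinj <| ht.trans <| Fintype.sum_eq_single i fun j hj => by rw [hy j hj, h0]

section Preserver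

variable {R R' : Type*} [Ring R] [StarRing R] [Ring R'] [StarRing R'] {φ : R → R'} {m : ℕ}

lemma map_zero_of_map_pn (hsurj : Function.Surjective φ) {ξ : R}
    (hφ : ∀ a b, φ (pn m a b ξ) = pn m (φ a) (φ b) (φ ξ)) : φ 0 = 0 := by
  obtain ⟨z, hz⟩ := hsurj 0
  rw [← pn_zero_left m z ξ, hφ, hz, pn_zero_middle]

lemma exists_three_le_map_pn {S : Set R} {n : ℕ}
    (hφ : ∀ a b, ∀ ξ ∈ S, φ (pn n a b ξ) = pn n (φ a) (φ b) (φ ξ)) :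
    ∃ m, 3 ≤ m ∧ ∀ a b, ∀ ξ ∈ S, φ (pn m a b ξ) = pn m (φ a) (φ b) (φ ξ) := by
  rcases le_or_gt 3 n with hn | hn
  · exact ⟨n, hn, hφ⟩
  refine ⟨3, le_rfl, fun a b ξ hξ => ?_⟩
  have hlie : ∀ x y, φ (starLie x y) = starLie (φ x) (φ y) := fun x y => by
    simpa only [pn_of_le_two (by omega : n ≤ 2)] using hφ x y ξ hξ
  rw [pn_three, pn_three, hlie, hlie]

lemma map_pn_eq_sum {ξ : R} (hφ : ∀ a b, φ (pn m a b ξ) = pn m (φ a) (φ b) (φ ξ))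
    {ι : Type*} {s : Finset ι} {t : R} {y : ι → R} (ht : φ t = ∑ i ∈ s, φ (y i)) (a : R) :
    φ (pn m a t ξ) = ∑ i ∈ s, φ (pn m a (y i) ξ) := by
  simp only [hφ, ht, pn_sum_middle]

theorem map_sum_of_map_pn {ι : Type*} [Fintype ι] [Nontrivial ι] {P : ι → R}
    (hP : ∀ i, IsStarProjection (P i)) (horth : Pairwise fun i j => P i * P j = 0)
    (hsum : ∑ i, P i = 1) (hfaithful : ∀ i X, (∀ Y, P i * Y * X = 0) → X = 0) (hm : 3 ≤ m)
    (hφ : Function.Bijective φ) (hpres : ∀ a b i, φ (pn m a b (P i)) = pn m (φ a) (φ b) (φ (P i)))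
    {x : ι × ι → R} (hx : ∀ jk, ∃ y, x jk = P jk.1 * y * P jk.2) :
    φ (∑ jk, x jk) = ∑ jk, φ (x jk) := by
  have hcorner : ∀ jk, P jk.1 * x jk * P jk.2 = x jk := fun jk => by
    obtain ⟨y, hy⟩ := hx jk
    rw [hy, ← mul_assoc, ← mul_assoc, (hP _).isIdempotentElem.eq, mul_assoc,
      (hP _).isIdempotentElem.eq]
  obtain ⟨T, hT⟩ := hφ.2 (∑ jk, φ (x jk))
  obtain ⟨i₀⟩ : Nonempty ι := inferInstance
  have h0 : φ 0 = 0 := map_zero_of_map_pn hφ.2 (hpres · · i₀)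
  suffices hT_corner : ∀ jk, P jk.1 * T * P jk.2 = x jk by
    rw [← hT, eq_sum_mul_mul hsum T, Fintype.sum_congr _ _ hT_corner]
  rintro ⟨j, k⟩
  obtain ⟨l, hlk⟩ := exists_ne k
  have hkl : P k * P l = 0 := horth hlk.symm
  have key : ∀ Y, pn m (P l * Y * P j) (T - x (j, k)) (P k) = 0 := by
    intro Y
    have hs : P k * (P l * Y * P j) = 0 := by simp only [← mul_assoc, hkl, zero_mul]
    have hother : ∀ jk ≠ (j, k), pn m (P l * Y * P j) (x jk) (P k) = 0 := by
      intro jk hne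
      have hu : P l * Y * P j * (P jk.1 * x jk * P jk.2) * P k = 0 := by
        rw [show P l * Y * P j * (P jk.1 * x jk * P jk.2) * P k
            = P l * Y * (P j * (P jk.1 * x jk * P jk.2) * P k) by simp only [mul_assoc],
          mul_mul_mul_mul_eq_zero horth hne, mul_zero]
      rw [pn_eq_of_mul_eq_zero (hP k) hs _ hm, ← hcorner jk, hu, star_zero, sub_zero]
    rw [pn_sub_middle, eq_of_map_eq_sum hφ.1 h0 (map_pn_eq_sum (hpres · · k) hT _) _ hother,
      sub_self]
  have := mul_mul_eq_zero_of_forall_pn_eq_zero (hP k) (hP l) hkl (hfaithful l) hm key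
  rwa [mul_sub, sub_mul, hcorner (j, k), sub_eq_zero] at this

end Preserver

variable {A A' : Type*}
  [NormedRing A] [StarRing A] [CStarRing A] [NormedAlgebra ℂ A]
  [CompleteSpace A] [StarModule ℂ A]
  [NormedRing A'] [StarRing A'] [CStarRing A'] [NormedAlgebra ℂ A']
  [CompleteSpace A'] [StarModule ℂ A']

theorem stmt6_general
    (P₁ : A) (hP₁proj : P₁ * P₁ = P₁) (hP₁star : star P₁ = P₁)
    (P₂ : A) (hP₂ : P₂ = 1 - P₁)
    (hspade : ∀ Pj ∈ ({P₁, P₂} : Set A), ∀ X : A, (∀ Y : A, Pj * Y * X = 0) → X = 0)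
    (n : ℕ)
    (φ : A → A') (hbij : Function.Bijective φ)
    (hbullet : ∀ a b : A, ∀ Ξ ∈ ({P₁, P₂, 1} : Set A),
      φ (pn n a b Ξ) = pn n (φ a) (φ b) (φ Ξ))
    :
    ∀ a b c d : A,
      (∃ x : A, a = P₁ * x * P₁) → (∃ x : A, b = P₁ * x * P₂) →
      (∃ x : A, c = P₂ * x * P₁) → (∃ x : A, d = P₂ * x * P₂) →
      φ (a + b + c + d) = φ a + φ b + φ c + φ d := by
  intro a b c d ha hb hc hd
  obtain ⟨m, hm, hpres⟩ := exists_three_le_map_pn hbullet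
  have hP₁ : IsStarProjection P₁ := ⟨hP₁proj, hP₁star⟩
  have hP : ∀ i, IsStarProjection (![P₁, P₂] i) := by
    simp [Fin.forall_fin_two, hP₂, hP₁, hP₁.one_sub]
  have horth : Pairwise fun i j => ![P₁, P₂] i * ![P₁, P₂] j = 0 := by
    simp [Pairwise, Fin.forall_fin_two, hP₂, hP₁.isIdempotentElem.mul_one_sub_self,
      hP₁.isIdempotentElem.one_sub_mul_self]
  have hmem : ∀ i, ![P₁, P₂] i ∈ ({P₁, P₂} : Set A) := by simp [Fin.forall_fin_two]
  have hmem' : ∀ i, ![P₁, P₂] i ∈ ({P₁, P₂, 1} : Set A) := by simp [Fin.forall_fin_two]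
  have h := map_sum_of_map_pn hP horth (by simp [hP₂]) (fun i => hspade _ (hmem i)) hm hbij
    (fun a b i => hpres a b _ (hmem' i))
    (x := fun jk => ![![a, b], ![c, d]] jk.1 jk.2)
    (by simpa [Prod.forall, Fin.forall_fin_two] using ⟨⟨ha, hb⟩, hc, hd⟩)
  simpa [Fintype.sum_prod_type, add_assoc] using h

theorem stmt6
    (P₁ : A) (hP₁proj : P₁ * P₁ = P₁) (hP₁star : star P₁ = P₁)
    (hP₁ne0 : P₁ ≠ 0) (hP₁ne1 : P₁ ≠ 1)
    (P₂ : A) (hP₂ : P₂ = 1 - P₁)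
    (hspade : ∀ Pj ∈ ({P₁, P₂} : Set A), ∀ X : A, (∀ Y : A, Pj * Y * X = 0) → X = 0)
    (n : ℕ) (hn : 2 ≤ n)
    (φ : A → A') (hbij : Function.Bijective φ) (hunit : φ 1 = 1)
    (hbullet : ∀ a b : A, ∀ Ξ ∈ ({P₁, P₂, 1} : Set A),
      φ (pn n a b Ξ) = pn n (φ a) (φ b) (φ Ξ))
    :
    ∀ a b c d : A,
      (∃ x : A, a = P₁ * x * P₁) → (∃ x : A, b = P₁ * x * P₂) →
      (∃ x : A, c = P₂ * x * P₁) → (∃ x : A, d = P₂ * x * P₂) →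
      φ (a + b + c + d) = φ a + φ b + φ c + φ d :=
  stmt6_general P₁ hP₁proj hP₁star P₂ hP₂ hspade n φ hbij hbullet
end

section
/- Let A and A' be unital C*-algebras, P₁ a nontrivial symmetric projection in A, P₂ = I_A − P₁, and fix an integer n ≥ 2. Let φ: A → A' be a bijective map with φ(I_A) = I_{A'}, φ(λA) = λφ(A) for all λ ∈ ℂ, φ(0) = 0, satisfying (•): φ(p_{n*}(A,B,Ξ,…,Ξ)) = p_{n*}(φ(A),φ(B),φ(Ξ),…,φ(Ξ)) for all A, B ∈ A and Ξ ∈ {P₁, P₂, I_A}. Then for j ∈ {1,2}, Q_j = φ(P_j) is a symmetric projection in A', i.e., Q_j = Q_j² = Q_j*. -/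
/-!
Since `[z, 1]_* = z - z*`, the map `z ↦ [z, 1]_*` doubles skew-adjoint elements, so
`p_{n*}(a, b, 1, …, 1) = 2^(n-2) [a, b]_*` as soon as `[a, b]_*` is skew-adjoint. Taking
`(a, b) = (P, 1)` gives `2^(n-2) (P - P*)`, which vanishes for `P = P*`; transported by `φ` this
forces `Q = φ P` to be self-adjoint. Taking `(a, b) = (iP, P)` gives `2^(n-1) i P²`, and
transporting `P² = P` along `φ` gives `Q² = Q`.
-/

section StarRing

variable {R : Type*} [Ring R] [StarRing R]

lemma starLie_one (z : R) : starLie z 1 = z - star z := by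
  simp [starLie]

lemma iterate_starLie_one_of_star_eq_neg {z : R} (hz : star z = -z) (k : ℕ) :
    (fun w => starLie w (1 : R))^[k] z = 2 ^ k • z := by
  induction k with
  | zero => simp
  | succ k ih =>
    rw [Function.iterate_succ_apply', ih, starLie_one, star_nsmul, hz, pow_succ, mul_nsmul,
      smul_neg, sub_neg_eq_add, two_nsmul]

lemma pn_of_star_starLie_eq_neg (n : ℕ) {a b : R} (h : star (starLie a b) = -starLie a b) :
    pn n a b 1 = 2 ^ (n - 2) • starLie a b :=
  iterate_starLie_one_of_star_eq_neg h _

lemma pn_one_one_s10 (n : ℕ) (a : R) : pn n a 1 1 = 2 ^ (n - 2) • (a - star a) := by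
  have hskew : star (starLie a 1) = -starLie a 1 := by
    rw [starLie_one, star_sub, star_star, neg_sub]
  rw [pn_of_star_starLie_eq_neg n hskew, starLie_one]

end StarRing

section ComplexStarAlgebra

variable {R : Type*} [Ring R] [StarRing R] [Algebra ℂ R] [StarModule ℂ R]

lemma starLie_I_smul_self {a : R} (ha : IsSelfAdjoint a) :
    starLie (Complex.I • a) a = (2 * Complex.I) • (a * a) := by
  rw [starLie, star_smul, ha.star_eq, Complex.star_def, Complex.conj_I, smul_mul_assoc,
    mul_smul_comm, neg_smul, sub_neg_eq_add, ← add_smul, two_mul]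

lemma pn_I_smul_self (n : ℕ) {a : R} (ha : IsSelfAdjoint a) :
    pn n (Complex.I • a) a 1 = 2 ^ (n - 2) • (2 * Complex.I) • (a * a) := by
  have hskew : star (starLie (Complex.I • a) a) = -starLie (Complex.I • a) a := by
    rw [starLie_I_smul_self ha, star_smul, star_mul a a, ha.star_eq]
    simp
  rw [pn_of_star_starLie_eq_neg n hskew, starLie_I_smul_self ha]

end ComplexStarAlgebra

lemma isStarProjection_apply_of_map_pn {A A' : Type*}
    [Ring A] [StarRing A] [Algebra ℂ A] [StarModule ℂ A]
    [Ring A'] [StarRing A'] [Algebra ℂ A'] [StarModule ℂ A']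
    (n : ℕ) {φ : A → A'} (hunit : φ 1 = 1) (hsmul : ∀ (c : ℂ) (a : A), φ (c • a) = c • φ a)
    (hpn : ∀ a b : A, φ (pn n a b 1) = pn n (φ a) (φ b) (φ 1))
    {P : A} (hP : IsStarProjection P) : IsStarProjection (φ P) := by
  have hzero : φ 0 = 0 := by simpa using hsmul 0 0
  have hsa : IsSelfAdjoint (φ P) := by
    have h := hpn P 1
    rw [pn_one_one_s10, hP.isSelfAdjoint.star_eq, sub_self, smul_zero, hzero, hunit, pn_one_one_s10,
      ← Nat.cast_smul_eq_nsmul ℂ, eq_comm, smul_eq_zero_iff_right (by simp),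
      sub_eq_zero] at h
    exact h.symm
  refine ⟨?_, hsa⟩
  have h := hpn (Complex.I • P) P
  rw [pn_I_smul_self n hP.isSelfAdjoint, hP.isIdempotentElem.eq, hunit, hsmul, pn_I_smul_self n hsa,
    ← Nat.cast_smul_eq_nsmul ℂ, ← Nat.cast_smul_eq_nsmul ℂ, smul_smul, smul_smul, hsmul] at h
  exact (smul_right_injective A' (by simp [Complex.I_ne_zero]) h).symm

variable {A A' : Type*}
  [NormedRing A] [StarRing A] [CStarRing A] [NormedAlgebra ℂ A]
  [CompleteSpace A] [StarModule ℂ A]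
  [NormedRing A'] [StarRing A'] [CStarRing A'] [NormedAlgebra ℂ A']
  [CompleteSpace A'] [StarModule ℂ A']

theorem stmt10_general
    (P₁ : A) (hP₁proj : P₁ * P₁ = P₁) (hP₁star : star P₁ = P₁)
    (P₂ : A) (hP₂ : P₂ = 1 - P₁)
    (n : ℕ)
    (φ : A → A') (hunit : φ 1 = 1)
    (hsmul : ∀ (c : ℂ) (a : A), φ (c • a) = c • φ a)
    (hbullet : ∀ a b : A, ∀ Ξ ∈ ({P₁, P₂, 1} : Set A),
      φ (pn n a b Ξ) = pn n (φ a) (φ b) (φ Ξ))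
    :
    ∀ Pj ∈ ({P₁, P₂} : Set A), φ Pj * φ Pj = φ Pj ∧ star (φ Pj) = φ Pj := by
  have hP₁ : IsStarProjection P₁ := ⟨hP₁proj, hP₁star⟩
  have hpn (a b : A) : φ (pn n a b 1) = pn n (φ a) (φ b) (φ 1) := hbullet a b 1 (by simp)
  intro Pj hPj
  have hPj_proj : IsStarProjection Pj := by
    rcases hPj with rfl | rfl
    · exact hP₁
    · exact hP₂ ▸ hP₁.one_sub
  have hQ := isStarProjection_apply_of_map_pn n hunit hsmul hpn hPj_proj
  exact ⟨hQ.isIdempotentElem.eq, hQ.isSelfAdjoint.star_eq⟩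

theorem stmt10
    (P₁ : A) (hP₁proj : P₁ * P₁ = P₁) (hP₁star : star P₁ = P₁)
    (hP₁ne0 : P₁ ≠ 0) (hP₁ne1 : P₁ ≠ 1)
    (P₂ : A) (hP₂ : P₂ = 1 - P₁)
    (n : ℕ) (hn : 2 ≤ n)
    (φ : A → A') (hbij : Function.Bijective φ) (hunit : φ 1 = 1)
    (hsmul : ∀ (c : ℂ) (a : A), φ (c • a) = c • φ a)
    (hzero : φ 0 = 0)
    (hbullet : ∀ a b : A, ∀ Ξ ∈ ({P₁, P₂, 1} : Set A),
      φ (pn n a b Ξ) = pn n (φ a) (φ b) (φ Ξ))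
    :
    ∀ Pj ∈ ({P₁, P₂} : Set A), φ Pj * φ Pj = φ Pj ∧ star (φ Pj) = φ Pj :=
  stmt10_general P₁ hP₁proj hP₁star P₂ hP₂ n φ hunit hsmul hbullet
end
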